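/- arXiv:2210.16998 — 7 statements merged into one kernel-verified Lean document; each statement's English description precedes it below -/
import Mathlib

section
/- Let V be a finite vertex type and let E : V → V → Prop be an edge relation. Then every simple path of (V, E) is a subpath of some prime path of (V, E). -/
/-- A (directed) path in the graph `(V, E)`: a nonempty list of vertices in which
consecutive vertices are related by the edge relation `E`. -/
def IsPath {V : Type*} (E : V → V → Prop) (l : List V) : Prop :=
  l ≠ [] ∧ l.Chain' E

/-- A simple path: a path in which no vertex occurs more than once,
except that the first and last vertices may coincide. -/
def IsSimplePath {V : Type*} (E : V → V → Prop) (l : List V) : Prop :=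
  IsPath E l ∧ l.dropLast.Nodup ∧ l.tail.Nodup

/-- A closed path: it has at least two vertices and its first and last vertices coincide. -/
def IsClosedPath {V : Type*} (l : List V) : Prop :=
  2 ≤ l.length ∧ l.head? = l.getLast?

/-- A prime path: a maximal simple path, i.e. a simple path that is not a proper
subpath (contiguous sublist) of any simple path. -/
def IsPrimePath {V : Type*} (E : V → V → Prop) (l : List V) : Prop :=
  IsSimplePath E l ∧ ∀ q : List V, IsSimplePath E q → l <:+: q → l = q


private lemma simple_length_le {V : Type*} [Fintype V] (E : V → V → Prop)
    (l : List V) (hl : IsSimplePath E l) : l.length ≤ Fintype.card V + 1 := by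
  have h1 : l.dropLast.length ≤ Fintype.card V := hl.2.1.length_le_card
  have h2 : l.dropLast.length = l.length - 1 := l.length_dropLast
  omega

private lemma aux_prime {V : Type*} [Fintype V] (E : V → V → Prop) :
    ∀ n (p : List V), Fintype.card V + 1 - p.length ≤ n → IsSimplePath E p →
      ∃ q : List V, IsPrimePath E q ∧ p <:+: q := by
  intro n
  induction n with
  | zero =>
    intro p hn hp
    refine ⟨p, ⟨hp, ?_⟩, List.infix_refl p⟩
    intro q hq hpq
    have h1 := hpq.length_le
    have h2 := simple_length_le E q hq
    exact hpq.sublist.eq_of_length (by omega)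
  | succ n ih =>
    intro p hn hp
    by_cases h : ∀ q : List V, IsSimplePath E q → p <:+: q → p = q
    · exact ⟨p, ⟨hp, h⟩, List.infix_refl p⟩
    · push_neg at h
      obtain ⟨q, hq, hpq, hne⟩ := h
      have h1 := hpq.length_le
      have hlt : p.length < q.length := by
        rcases lt_or_eq_of_le h1 with h | h
        · exact h
        · exact absurd (hpq.sublist.eq_of_length h) hne
      have h2 := simple_length_le E q hq
      obtain ⟨r, hr, hqr⟩ := ih q (by omega) hq
      exact ⟨r, hr, hpq.trans hqr⟩

/-- Every simple path of a finite graph is a subpath of some prime path. -/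
theorem simplePath_isInfix_primePath {V : Type*} [Fintype V] (E : V → V → Prop)
    (p : List V) (hp : IsSimplePath E p) :
    ∃ q : List V, IsPrimePath E q ∧ p <:+: q := by
  exact aux_prime E (Fintype.card V + 1 - p.length) p le_rfl hp
end

section
/- Let V be a vertex type and E : V → V → Prop an edge relation. Every closed simple path is a prime path: if p = v₁,…,v_k is a simple path with k ≥ 2 and v₁ = v_k, then p is not a proper subpath of any simple path of (V, E). -/
theorem closed_simplePath_isPrime' {V : Type*} (E : V → V → Prop)
    (p : List V) (hp : (p ≠ [] ∧ p.Chain' E) ∧ p.dropLast.Nodup ∧ p.tail.Nodup)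
    (hc : 2 ≤ p.length ∧ p.head? = p.getLast?) :
    ∀ q : List V, ((q ≠ [] ∧ q.Chain' E) ∧ q.dropLast.Nodup ∧ q.tail.Nodup) → p <:+: q → p = q := by
  classical
  obtain ⟨hlen, hhl⟩ := hc
  match p, hlen with
  | a :: b :: r, _ =>
  intro q hq hpq
  -- a occurs twice in p
  have hha : (a :: b :: r).getLast? = some a := by
    simpa using hhl.symm
  have hmem : a ∈ b :: r := by
    rw [List.getLast?_cons_cons] at hha
    obtain ⟨hne, hx⟩ := List.mem_getLast?_eq_getLast hha
    exact hx ▸ List.getLast_mem hne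
  have hcount : 2 ≤ (a :: b :: r).count a := by
    rw [List.count_cons_self]
    have := List.count_pos_iff.mpr hmem
    omega
  have key : ∀ m : List V, (a :: b :: r) <:+: m → ¬ m.Nodup := by
    intro m hm hnd
    have h1 := hm.sublist.count_le a
    have h2 := List.nodup_iff_count_le_one.mp hnd a
    omega
  obtain ⟨s, t, rfl⟩ := hpq
  -- s must be empty
  cases s with
  | cons x s' =>
    obtain ⟨⟨-, -⟩, hdl, htl⟩ := hq
    refine absurd htl ?_
    have := key (s' ++ (a :: b :: r) ++ t) ⟨s', t, by simp⟩
    simpa using this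
  | nil =>
    obtain ⟨⟨-, -⟩, hdl, htl⟩ := hq
    -- t must be empty
    rcases t.eq_nil_or_concat with rfl | ⟨t', y, rfl⟩
    · simp
    · refine absurd hdl ?_
      have he : ([] ++ (a :: b :: r) ++ t'.concat y) = ((a :: b :: r) ++ t').concat y := by
        simp
      rw [he, List.concat_eq_append, List.dropLast_concat]
      exact key _ ⟨[], t', by simp⟩


/-- Every closed simple path is a prime path: it is not a proper subpath of any
simple path. -/
theorem closed_simplePath_isPrime {V : Type*} (E : V → V → Prop)
    (p : List V) (hp : IsSimplePath E p) (hc : IsClosedPath p) :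
    IsPrimePath E p :=
  ⟨hp, closed_simplePath_isPrime' E p hp hc⟩
end

section
/- Let V be a vertex type, E : V → V → Prop an edge relation, and p a prime path of (V, E) that is not closed, with first vertex u. Then for every vertex x with E x u, the vertex x occurs in p at some position other than the last position of p. -/
/-! Otherwise `x :: p` would be a simple path having `p` as a proper subpath: the only vertex
of `p` it could repeat is `u`, and `u` occurs once in `p` because `p` is not closed. -/

theorem IsSimplePath.cons {V : Type*} {E : V → V → Prop} {x u : V} {t : List V}
    (h : IsSimplePath E (u :: t)) (hx : E x u) (hxd : x ∉ (u :: t).dropLast) (hut : u ∉ t) :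
    IsSimplePath E (x :: u :: t) := by
  obtain ⟨⟨-, hchain⟩, hdl, htl⟩ := h
  refine ⟨⟨List.cons_ne_nil _ _, List.isChain_cons_cons.mpr ⟨hx, hchain⟩⟩, ?_, ?_⟩
  · rw [List.dropLast_cons_cons]
    exact List.nodup_cons.mpr ⟨hxd, hdl⟩
  · exact List.nodup_cons.mpr ⟨hut, htl⟩

/-- A recurrence of the first vertex can only be at the last position, which closes the path. -/
theorem not_mem_tail_of_not_isClosedPath {V : Type*} {u : V} {t : List V}
    (hdl : (u :: t).dropLast.Nodup) (hnc : ¬ IsClosedPath (u :: t)) : u ∉ t := by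
  intro hmem
  have ht : t ≠ [] := List.ne_nil_of_mem hmem
  rw [List.dropLast_cons_of_ne_nil ht, List.nodup_cons] at hdl
  have hlast : u = t.getLast ht := by
    rw [← List.dropLast_concat_getLast ht, List.mem_append] at hmem
    simpa [hdl.1] using hmem
  apply hnc
  refine ⟨Nat.succ_le_succ (List.length_pos_of_ne_nil ht), ?_⟩
  rw [List.head?_cons, List.getLast?_cons, List.getLast?_eq_some_getLast ht, ← hlast]
  rfl

theorem IsPrimePath.not_isSimplePath_cons {V : Type*} {E : V → V → Prop} {p : List V}
    (hp : IsPrimePath E p) (x : V) : ¬ IsSimplePath E (x :: p) := fun hsimple =>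
  List.cons_ne_self x p (hp.2 _ hsimple (List.suffix_cons x p).isInfix).symm

/-- If `p` is a non-closed prime path with first vertex `u`, then every
in-neighbor `x` of `u` occurs in `p` at some position other than the last one. -/
theorem primePath_pred_mem_dropLast {V : Type*} (E : V → V → Prop)
    (p : List V) (u : V) (hp : IsPrimePath E p) (hnc : ¬ IsClosedPath p)
    (hu : p.head? = some u) (x : V) (hx : E x u) :
    x ∈ p.dropLast := by
  obtain ⟨t, rfl⟩ := List.head?_eq_some_iff.mp hu
  by_contra hxd
  have hut : u ∉ t := not_mem_tail_of_not_isClosedPath hp.1.2.1 hnc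
  exact hp.not_isSimplePath_cons x (hp.1.cons hx hxd hut)
end

section
/- Let V be a vertex type, E : V → V → Prop an edge relation, and p a prime path of (V, E) that is not closed, with last vertex w. Then for every vertex y with E w y, the vertex y occurs in p at some position other than the first position of p. -/
/-! A prime path `p` that is not closed has no repeated vertex, so if an out-neighbour `y` of its
last vertex were missing from `p.tail`, then `p ++ [y]` would be a simple path properly
extending `p`, contradicting maximality. -/

theorem IsSimplePath.nodup_of_not_isClosedPath {V : Type*} {E : V → V → Prop} {l : List V}
    (h : IsSimplePath E l) (hnc : ¬ IsClosedPath l) : l.Nodup := by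
  obtain ⟨-, hdropLast, htail⟩ := h
  match l, hdropLast, htail with
  | [], _, _ => exact List.nodup_nil
  | [_], _, _ => exact List.nodup_singleton _
  | a :: b :: t, hdropLast, htail =>
    have hne : b :: t ≠ [] := List.cons_ne_nil b t
    have hlast : a ≠ (b :: t).getLast hne := fun h =>
      hnc ⟨by simp, by rw [List.getLast?_eq_some_getLast (by simp), List.getLast_cons hne, ← h]; rfl⟩
    rw [List.dropLast_cons_of_ne_nil hne, List.nodup_cons] at hdropLast
    refine List.nodup_cons.mpr ⟨fun ha => ?_, htail⟩
    rw [← List.dropLast_append_getLast hne, List.mem_append, List.mem_singleton] at ha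
    exact ha.elim hdropLast.1 hlast

theorem IsPath.concat {V : Type*} {E : V → V → Prop} {p : List V} {w y : V}
    (hp : IsPath E p) (hw : p.getLast? = some w) (hy : E w y) : IsPath E (p ++ [y]) := by
  refine ⟨by simp, List.isChain_append.mpr ⟨hp.2, List.isChain_singleton y, ?_⟩⟩
  rintro x hx z hz
  rw [hw, Option.mem_some_iff] at hx
  rw [List.head?_cons, Option.mem_some_iff] at hz
  exact hx ▸ hz ▸ hy

theorem IsPath.isSimplePath_concat {V : Type*} {E : V → V → Prop} {p : List V} {w y : V}
    (hp : IsPath E p) (hnodup : p.Nodup) (hw : p.getLast? = some w) (hy : E w y)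
    (hyp : y ∉ p.tail) : IsSimplePath E (p ++ [y]) := by
  refine ⟨hp.concat hw hy, by rwa [List.dropLast_concat], ?_⟩
  rw [List.tail_append_of_ne_nil hp.1, List.nodup_append]
  exact ⟨hnodup.sublist (List.tail_sublist p), List.nodup_singleton y,
    fun x hx z hz hxz => hyp (hxz.trans (List.mem_singleton.mp hz) ▸ hx)⟩

/-- If `p` is a non-closed prime path with last vertex `w`, then every
out-neighbor `y` of `w` occurs in `p` at some position other than the first one. -/
theorem primePath_succ_mem_tail {V : Type*} (E : V → V → Prop)
    (p : List V) (w : V) (hp : IsPrimePath E p) (hnc : ¬ IsClosedPath p)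
    (hw : p.getLast? = some w) (y : V) (hy : E w y) :
    y ∈ p.tail := by
  by_contra hyp
  obtain ⟨hsimple, hmax⟩ := hp
  have hext : IsSimplePath E (p ++ [y]) :=
    hsimple.1.isSimplePath_concat (hsimple.nodup_of_not_isClosedPath hnc) hw hy hyp
  have hEq : p = p ++ [y] := hmax _ hext (List.prefix_append p [y]).isInfix
  simpa using congrArg List.length hEq
end

section
/- Let V be a finite nonempty vertex type and E : V → V → Prop an edge relation. Then every vertex v ∈ V occurs on some prime path of (V, E); consequently prime path coverage subsumes node coverage. -/
/-!
Simple paths in a finite graph have length at most `|V| + 1`, so among the simple paths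
containing `⟨v⟩` as a subpath there is a longest one; a longest one cannot be a proper subpath
of a simple path, since that path would also contain `⟨v⟩` and be strictly longer.
-/

namespace IsSimplePath

variable {V : Type*} {E : V → V → Prop}

lemma singleton (v : V) : IsSimplePath E [v] :=
  ⟨⟨List.cons_ne_nil v [], List.isChain_singleton v⟩, List.nodup_nil, List.nodup_nil⟩

lemma length_le_natCard_add_one [Finite V] {p : List V} (hp : IsSimplePath E p) :
    p.length ≤ Nat.card V + 1 := by
  have hdrop : p.dropLast.length ≤ Nat.card V := hp.2.1.length_le_natCard
  rw [List.length_dropLast] at hdrop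
  omega

lemma exists_isPrimePath_infix [Finite V] {p : List V} (hp : IsSimplePath E p) :
    ∃ q, IsPrimePath E q ∧ p <:+: q := by
  let S := {q : List V | IsSimplePath E q ∧ p <:+: q}
  have hS : (List.length '' S).Finite :=
    (Set.finite_Iic (Nat.card V + 1)).subset <| by
      rintro _ ⟨q, hq, rfl⟩
      exact hq.1.length_le_natCard_add_one
  obtain ⟨q, ⟨hq, hpq⟩, hmax⟩ := hS.exists_maximalFor' List.length S ⟨p, hp, List.infix_refl p⟩
  refine ⟨q, ⟨hq, fun r hr hqr => ?_⟩, hpq⟩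
  have hlen : r.length ≤ q.length := hmax ⟨hr, hpq.trans hqr⟩ hqr.sublist.length_le
  exact hqr.sublist.eq_of_length (le_antisymm hqr.sublist.length_le hlen)

end IsSimplePath

theorem vertex_mem_primePath_general {V : Type*} [Fintype V]
    (E : V → V → Prop) (v : V) :
    ∃ p : List V, IsPrimePath E p ∧ v ∈ p := by
  obtain ⟨p, hp, hvp⟩ := (IsSimplePath.singleton (E := E) v).exists_isPrimePath_infix
  exact ⟨p, hp, hvp.subset (List.mem_singleton_self v)⟩

/-- In a finite nonempty graph, every vertex occurs on some prime path
(prime path coverage subsumes node coverage). -/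
theorem vertex_mem_primePath {V : Type*} [Fintype V] [Nonempty V]
    (E : V → V → Prop) (v : V) :
    ∃ p : List V, IsPrimePath E p ∧ v ∈ p :=
  vertex_mem_primePath_general E v
end

section
/- Let V be a finite vertex type and E : V → V → Prop an edge relation. For every edge, i.e., every pair of vertices u, v with E u v, there exists a prime path of (V, E) in which u and v occur at consecutive positions, with u immediately followed by v. Consequently prime path coverage subsumes edge (branch) coverage. -/
section

variable {V : Type*} {E : V → V → Prop}

theorem isSimplePath_pair {u v : V} (huv : E u v) : IsSimplePath E [u, v] :=
  ⟨⟨List.cons_ne_nil _ _, List.isChain_pair.mpr huv⟩, List.nodup_singleton u,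
    List.nodup_singleton v⟩

theorem IsSimplePath.length_le_natCard_add_one_s7 [Finite V] {l : List V}
    (hl : IsSimplePath E l) : l.length ≤ Nat.card V + 1 := by
  have h := hl.2.1.length_le_natCard
  rw [List.length_dropLast] at h
  omega

/-- A simple path that is not prime is a proper infix of a strictly longer one; in a finite
graph simple paths have bounded length, so iterating ends at a prime path. -/
theorem IsSimplePath.exists_isPrimePath_infix_s7 [Finite V] {l : List V}
    (hl : IsSimplePath E l) : ∃ p, IsPrimePath E p ∧ l <:+: p := by
  by_cases hprime : IsPrimePath E l
  · exact ⟨l, hprime, List.infix_refl l⟩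
  simp only [IsPrimePath, hl, true_and, not_forall] at hprime
  obtain ⟨q, hq, hlq, hne⟩ := hprime
  have hlonger : l.length < q.length :=
    lt_of_not_ge fun h => hne (hlq.eq_of_length_le h)
  have := hq.length_le_natCard_add_one_s7
  obtain ⟨p, hp, hqp⟩ := hq.exists_isPrimePath_infix_s7
  exact ⟨p, hp, hlq.trans hqp⟩
termination_by Nat.card V + 1 - l.length

end

/-- In a finite graph, every edge `E u v` occurs (as the contiguous block
`[u, v]`) on some prime path (prime path coverage subsumes edge coverage). -/
theorem edge_mem_primePath {V : Type*} [Fintype V] (E : V → V → Prop)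
    (u v : V) (huv : E u v) :
    ∃ p : List V, IsPrimePath E p ∧ [u, v] <:+: p :=
  (isSimplePath_pair huv).exists_isPrimePath_infix_s7
end

section
/- Let V be a vertex type and E : V → V → Prop an edge relation. Let F : V → Set (List V) be a family of sets of vertex sequences such that (i) for every vertex v, the single-vertex sequence ⟨v⟩ belongs to F v, and (ii) whenever q ∈ F u, E u v holds, and the sequence q·v obtained by appending v to q is a simple path of (V, E), then q·v ∈ F v. Then every simple path of (V, E) with last vertex v belongs to F v. In particular, every prime path ending at v belongs to F v. -/
/-- Induction principle for simple paths: if a family `F` of per-vertex sets of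
vertex sequences contains each single-vertex sequence and is closed under
single-edge simple extensions, then `F v` contains every simple path ending at
`v`; in particular it contains every prime path ending at `v`. -/
theorem simplePath_mem_of_closed_under_extension {V : Type*} (E : V → V → Prop)
    (F : V → Set (List V))
    (h1 : ∀ v : V, [v] ∈ F v)
    (h2 : ∀ (q : List V) (u v : V), q ∈ F u → E u v →
      IsSimplePath E (q ++ [v]) → q ++ [v] ∈ F v) :
    (∀ (p : List V) (v : V), IsSimplePath E p → p.getLast? = some v → p ∈ F v) ∧
    (∀ (p : List V) (v : V), IsPrimePath E p → p.getLast? = some v → p ∈ F v) := by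
  have main : ∀ (p : List V) (v : V), IsSimplePath E p → p.getLast? = some v → p ∈ F v := by
    intro p
    induction p using List.reverseRecOn with
    | nil => intro v _ h; simp at h
    | append_singleton q a ih =>
      intro v hsp hlast
      rw [List.getLast?_append, List.getLast?_singleton] at hlast
      · injection hlast with hva
        subst hva
        rcases q.eq_nil_or_concat with rfl | ⟨r, u, rfl⟩
        · simpa using h1 a
        · rw [List.concat_eq_append] at hsp ih ⊢
          have hq : IsSimplePath E (r ++ [u]) := by
            obtain ⟨⟨hne, hch⟩, hd, ht⟩ := hsp
            refine ⟨⟨by simp, (List.isChain_append (l₂ := [a])).mp hch |>.1⟩, ?_, ?_⟩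
            · have : (r ++ [u]).dropLast.Sublist ((r ++ [u]) ++ [a]).dropLast := by
                rw [List.dropLast_concat, List.dropLast_concat]
                exact List.sublist_append_left _ _
              exact this.nodup hd
            · have : (r ++ [u]).tail.Sublist ((r ++ [u]) ++ [a]).tail := by
                apply List.Sublist.tail
                exact (List.sublist_append_left _ _)
              exact this.nodup ht
          have hEuv : E u a := by
            obtain ⟨⟨hne, hch⟩, _, _⟩ := hsp
            have := (List.isChain_append (l₁ := r ++ [u]) (l₂ := [a])).mp hch
            have h3 := this.2.2
            exact h3 u (by simp [List.getLast?_append]) a rfl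
          have hqF : r ++ [u] ∈ F u := ih u hq (by simp [List.getLast?_append])
          exact h2 (r ++ [u]) u a hqF hEuv hsp
  exact ⟨main, fun p v hp hl => main p v hp.1 hl⟩
end
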